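/- arXiv:math/9310220 — 4 statements merged into one kernel-verified Lean document; each statement's English description precedes it below -/
import Mathlib

section
/- Let h ∈ ℂ[X] be a polynomial of degree N ≥ 1 and let p ∈ ℂ[X] be a nonzero polynomial of degree kN + l with k ≥ 0 and 0 ≤ l ≤ N−1. Write p uniquely as p(x) = Σ_{j=0}^{N−1} x^j q_j(h(x)). Then deg q_j ≤ k for all 0 ≤ j ≤ N−1, deg q_j ≤ k−1 (i.e. deg q_j < k) for all j with l < j ≤ N−1, and deg q_l = k. -/
/-! For `q ≠ 0` the summand `X ^ j * q.comp h` has degree `deg q * N + j`, and for `j < N` these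
degrees are pairwise distinct modulo `N`; hence the degree of the sum is the largest of them.
Comparing with `k * N + l` (division with remainder by `N`) bounds every `deg q_j` and shows that
the maximum is attained exactly at `j = l`, with `deg q_l = k`. -/

open Polynomial Finset

section
variable {R : Type*} [Semiring R] [NoZeroDivisors R] {q h : R[X]}

theorem comp_ne_zero_of_natDegree_pos (hq : q ≠ 0) (hh : 0 < h.natDegree) : q.comp h ≠ 0 := by
  rw [Ne, comp_eq_zero_iff, not_or, not_and_or]
  refine ⟨hq, Or.inr fun hC => ?_⟩
  rw [hC, natDegree_C] at hh
  exact hh.false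

theorem degree_X_pow_mul_comp (j : ℕ) (hq : q ≠ 0) (hh : 0 < h.natDegree) :
    (X ^ j * q.comp h).degree = ((q.natDegree * h.natDegree + j : ℕ) : WithBot ℕ) := by
  have := Polynomial.nontrivial_iff.mp ⟨⟨q, 0, hq⟩⟩
  have hqh := comp_ne_zero_of_natDegree_pos hq hh
  rw [degree_eq_natDegree (mul_ne_zero (pow_ne_zero j X_ne_zero) hqh), natDegree_X_pow_mul j hqh,
    natDegree_comp]

theorem degree_sum_X_pow_mul_comp (q : Fin h.natDegree → R[X]) :
    (∑ j : Fin h.natDegree, X ^ (j : ℕ) * (q j).comp h).degree =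
      univ.sup fun j : Fin h.natDegree => (X ^ (j : ℕ) * (q j).comp h).degree := by
  refine degree_sum_eq_of_disjoint _ _ fun i hi j hj hij => ?_
  have hh : 0 < h.natDegree := i.pos
  have hqi : q i ≠ 0 := fun h0 => hi.2 (by simp [h0])
  have hqj : q j ≠ 0 := fun h0 => hj.2 (by simp [h0])
  simp only [Function.onFun, Function.comp_apply, degree_X_pow_mul_comp _ hqi hh,
    degree_X_pow_mul_comp _ hqj hh, Ne, Nat.cast_inj]
  intro heq
  have := congrArg (· % h.natDegree) heq
  simp only [Nat.mul_add_mod_self_right, Nat.mod_eq_of_lt i.isLt, Nat.mod_eq_of_lt j.isLt] at this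
  exact hij (Fin.ext this)

variable {j k l : ℕ}

theorem degree_le_of_degree_X_pow_mul_comp_le (hl : l < h.natDegree)
    (H : (X ^ j * q.comp h).degree ≤ ((k * h.natDegree + l : ℕ) : WithBot ℕ)) :
    q.degree ≤ k ∧ (l < j → q.degree < k) := by
  rcases eq_or_ne q 0 with rfl | hq
  · simp
  rw [degree_X_pow_mul_comp j hq (l.zero_le.trans_lt hl), Nat.cast_le] at H
  rw [degree_eq_natDegree hq, Nat.cast_le, Nat.cast_lt]
  exact ⟨by by_contra! H'; nlinarith, fun hlj => by by_contra! H'; nlinarith⟩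

theorem degree_eq_of_degree_X_pow_mul_comp_eq (hj : j < h.natDegree) (hl : l < h.natDegree)
    (H : (X ^ j * q.comp h).degree = ((k * h.natDegree + l : ℕ) : WithBot ℕ)) :
    q.degree = k ∧ j = l := by
  have hq : q ≠ 0 := by
    rintro rfl
    rw [zero_comp, mul_zero, degree_zero] at H
    exact WithBot.bot_ne_coe H
  rw [degree_X_pow_mul_comp j hq (j.zero_le.trans_lt hj), Nat.cast_inj] at H
  obtain rfl : q.natDegree = k := by
    apply le_antisymm <;> by_contra! H' <;> nlinarith
  exact ⟨degree_eq_natDegree hq, by omega⟩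

end

theorem stmt2_general (N : ℕ) (h : Polynomial ℂ) (hdeg : h.natDegree = N)
    (p : Polynomial ℂ) (hp : p ≠ 0) (k l : ℕ) (hl : l < N)
    (hpdeg : p.natDegree = k * N + l)
    (q : Fin N → Polynomial ℂ)
    (hq : p = ∑ j : Fin N, X ^ (j : ℕ) * (q j).comp h) :
    (∀ j : Fin N, (q j).degree ≤ (k : ℕ)) ∧
    (∀ j : Fin N, l < (j : ℕ) → (q j).degree < (k : ℕ)) ∧
    (q ⟨l, hl⟩).degree = (k : ℕ) := by
  subst hdeg
  have hsup : (univ.sup fun j : Fin h.natDegree => (X ^ (j : ℕ) * (q j).comp h).degree) =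
      ((k * h.natDegree + l : ℕ) : WithBot ℕ) := by
    rw [← degree_sum_X_pow_mul_comp, ← hq, degree_eq_natDegree hp, hpdeg]
  have hterm (j : Fin h.natDegree) := degree_le_of_degree_X_pow_mul_comp_le hl <| hsup ▸
    le_sup (f := fun j : Fin h.natDegree => (X ^ (j : ℕ) * (q j).comp h).degree) (mem_univ j)
  refine ⟨fun j => (hterm j).1, fun j => (hterm j).2, ?_⟩
  obtain ⟨j, -, hj⟩ := exists_mem_eq_sup univ ⟨⟨l, hl⟩, mem_univ _⟩
    fun j : Fin h.natDegree => (X ^ (j : ℕ) * (q j).comp h).degree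
  obtain ⟨hdeg, hjl⟩ := degree_eq_of_degree_X_pow_mul_comp_eq j.isLt hl (hsup ▸ hj).symm
  obtain rfl : j = ⟨l, hl⟩ := Fin.ext hjl
  exact hdeg

/-- Let `h ∈ ℂ[X]` have degree `N ≥ 1` and let `p ≠ 0` have degree `kN + l` with `0 ≤ l ≤ N-1`.
If `p(x) = ∑_{j=0}^{N-1} x^j q_j(h(x))`, then `deg q_j ≤ k` for all `j`, `deg q_j < k` for
`l < j ≤ N-1`, and `deg q_l = k`. -/
theorem stmt2 (N : ℕ) (hN : 1 ≤ N) (h : Polynomial ℂ) (hdeg : h.natDegree = N)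
    (p : Polynomial ℂ) (hp : p ≠ 0) (k l : ℕ) (hl : l < N)
    (hpdeg : p.natDegree = k * N + l)
    (q : Fin N → Polynomial ℂ)
    (hq : p = ∑ j : Fin N, X ^ (j : ℕ) * (q j).comp h) :
    (∀ j : Fin N, (q j).degree ≤ (k : ℕ)) ∧
    (∀ j : Fin N, l < (j : ℕ) → (q j).degree < (k : ℕ)) ∧
    (q ⟨l, hl⟩).degree = (k : ℕ) :=
  stmt2_general N h hdeg p hp k l hl hpdeg q hq
end

section
/- Let N ≥ 1, let c_{n,0} (n ≥ 0) be real numbers and c_{n,k} (n ≥ 0, 1 ≤ k ≤ N) complex numbers with c_{n,N} ≠ 0 for every n, and let (p_n)_{n≥0} be polynomials in ℂ[X], with p_m = 0 for m < 0, satisfying x^N p_n(x) = c_{n,0} p_n(x) + Σ_{k=1}^{N} ( conj(c_{n,k}) p_{n−k}(x) + c_{n+k,k} p_{n+k}(x) ) for all n ≥ 0. Define the N×N matrix polynomials P_n (n ≥ 0) with entries (P_n)_{m,j}(x) = R_{N,j}(p_{nN+m})(x) for 0 ≤ m,j ≤ N−1, set P_{−1} = 0, and define the N×N complex matrices D_n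 (n ≥ 1) by (D_n)_{i,l} = c_{nN+l, N+l−i} if i ≥ l and (D_n)_{i,l} = 0 if i < l, and E_n (n ≥ 0) by (E_n)_{i,l} = conj(c_{nN+i, i−l}) if i ≥ l and (E_n)_{i,l} = c_{nN+l, l−i} if i ≤ l. Then each D_n is lower triangular with nonzero determinant, each E_n is Hermitian, and for every n ≥ 0 the matrix three-term recurrence x P_n(x) = D_{n+1} P_{n+1}(x) + E_n P_n(x) + D_n^* P_{n−1}(x) holds (entrywise as an identity of polynomials, with D_0^* P_{−1} understood as 0). -/
open Polynomial Finset

lemma aux_coeff_comp_X_pow (f : Polynomial ℂ) (N : ℕ) (hN : 0 < N) (s : ℕ) :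
    (f.comp (X ^ N)).coeff s = if N ∣ s then f.coeff (s / N) else 0 := by
  rw [comp_eq_sum_left, Polynomial.sum, finset_sum_coeff]
  have hterm : ∀ i : ℕ, (C (f.coeff i) * ((X:Polynomial ℂ)^N) ^ i).coeff s
      = if s = N * i then f.coeff i else 0 := by
    intro i
    rw [← pow_mul, coeff_C_mul, coeff_X_pow]
    simp [mul_ite]
  by_cases hdvd : N ∣ s
  · rw [if_pos hdvd]
    rw [Finset.sum_eq_single (s / N)]
    · rw [hterm, if_pos (Nat.mul_div_cancel' hdvd).symm]
    · intro b _ hb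
      rw [hterm, if_neg]
      intro h
      exact hb (by rw [h, Nat.mul_div_cancel_left _ hN])
    · intro hb
      rw [hterm]
      simp only [notMem_support_iff] at hb
      simp [hb]
  · rw [if_neg hdvd]
    refine Finset.sum_eq_zero fun i _ => ?_
    rw [hterm, if_neg]
    rintro rfl
    exact hdvd ⟨i, rfl⟩

lemma aux_extract (N : ℕ) (hN : 0 < N) (g : ℕ → Polynomial ℂ) (a t : ℕ) (ha : a < N) :
    (∑ m ∈ Finset.range N, X ^ m * (g m).comp (X ^ N)).coeff (a + N * t) = (g a).coeff t := by
  rw [finset_sum_coeff]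
  have hterm : ∀ m : ℕ, ((X:Polynomial ℂ) ^ m * (g m).comp (X ^ N)).coeff (a + N * t)
      = if m ≤ a + N * t then (if N ∣ (a + N * t - m) then (g m).coeff ((a + N * t - m) / N) else 0) else 0 := by
    intro m
    rw [mul_comm, coeff_mul_X_pow', aux_coeff_comp_X_pow _ _ hN]
  rw [Finset.sum_eq_single a]
  · rw [hterm, if_pos (by omega)]
    have h1 : a + N * t - a = N * t := by omega
    rw [h1, if_pos ⟨t, rfl⟩, Nat.mul_div_cancel_left _ hN]
  · intro m hm hma
    rw [hterm]
    simp only [Finset.mem_range] at hm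
    by_cases h2 : m ≤ a + N * t
    · rw [if_pos h2]
      rw [if_neg]
      rintro ⟨u, hu⟩
      have h1 : a + N * t = m + N * u := by omega
      have hmod : (a + N * t) % N = (m + N * u) % N := by rw [h1]
      rw [Nat.add_mul_mod_self_left, Nat.add_mul_mod_self_left,
        Nat.mod_eq_of_lt ha, Nat.mod_eq_of_lt hm] at hmod
      exact hma hmod.symm
    · rw [if_neg h2]
  · intro h
    exact absurd (Finset.mem_range.mpr ha) h

lemma aux_unique (N : ℕ) (hN : 0 < N) (f g : ℕ → Polynomial ℂ)
    (h : ∑ m ∈ Finset.range N, X ^ m * (f m).comp (X ^ N)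
       = ∑ m ∈ Finset.range N, X ^ m * (g m).comp (X ^ N)) :
    ∀ a, a < N → f a = g a := by
  intro a ha
  ext t
  rw [← aux_extract N hN f a t ha, ← aux_extract N hN g a t ha, h]

/-- Scalar polynomials `p_n` satisfying a `(2N+1)`-term recurrence with `h(x) = x^N`
(and `c_{n,N} ≠ 0`) yield, via their components with respect to `x^N`, matrix polynomials
`P_n` satisfying a matrix three-term recurrence `x P_n = D_{n+1} P_{n+1} + E_n P_n + D_n^* P_{n-1}`
where `D_n` is lower triangular with nonzero determinant and `E_n` is Hermitian. -/
theorem stmt4 (N : ℕ) (hN : 1 ≤ N)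
    (c : ℤ → ℕ → ℂ) (hc0 : ∀ n : ℤ, 0 ≤ n → (c n 0).im = 0)
    (hcN : ∀ n : ℤ, 0 ≤ n → c n N ≠ 0)
    (p : ℤ → Polynomial ℂ) (hpneg : ∀ m : ℤ, m < 0 → p m = 0)
    (hrec : ∀ n : ℤ, 0 ≤ n →
      X ^ N * p n = C (c n 0) * p n + ∑ k ∈ Finset.Icc 1 N,
        (C (starRingEnd ℂ (c n k)) * p (n - k) + C (c (n + k) k) * p (n + k)))
    (q : ℤ → ℕ → Polynomial ℂ)
    (hq : ∀ n : ℤ, 0 ≤ n → p n = ∑ m ∈ Finset.range N, X ^ m * (q n m).comp (X ^ N))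
    (P : ℤ → Matrix (Fin N) (Fin N) (Polynomial ℂ))
    (hP : ∀ n : ℤ, 0 ≤ n → ∀ m j : Fin N, P n m j = q (n * N + (m : ℕ)) j)
    (hPneg : P (-1) = 0)
    (D : ℤ → Matrix (Fin N) (Fin N) ℂ)
    (hD : ∀ n : ℤ, 1 ≤ n → ∀ i l : Fin N,
      D n i l = if (l : ℕ) ≤ (i : ℕ) then c (n * N + (l : ℕ)) (N + l - i) else 0)
    (E : ℤ → Matrix (Fin N) (Fin N) ℂ)
    (hE : ∀ n : ℤ, 0 ≤ n → ∀ i l : Fin N,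
      E n i l = if (l : ℕ) ≤ (i : ℕ) then starRingEnd ℂ (c (n * N + (i : ℕ)) (i - l))
        else c (n * N + (l : ℕ)) (l - i)) :
    (∀ n : ℤ, 1 ≤ n → (∀ i l : Fin N, (i : ℕ) < (l : ℕ) → D n i l = 0) ∧ (D n).det ≠ 0) ∧
    (∀ n : ℤ, 0 ≤ n → (E n).conjTranspose = E n) ∧
    (∀ n : ℤ, 0 ≤ n →
      (X : Polynomial ℂ) • P n =
        (D (n + 1)).map C * P (n + 1) + (E n).map C * P n +
          ((D n).conjTranspose).map C * P (n - 1)) := by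
  have hN' : 0 < N := hN
  refine ⟨?_, ?_, ?_⟩
  · -- triangularity and determinant
    intro n hn
    have htri : ∀ i l : Fin N, (i : ℕ) < (l : ℕ) → D n i l = 0 := by
      intro i l hil
      rw [hD n hn i l, if_neg (by omega)]
    refine ⟨htri, ?_⟩
    have hdet : (D n).det = ∏ i : Fin N, D n i i := by
      apply Matrix.det_of_lowerTriangular
      intro i l h
      exact htri i l h
    rw [hdet]
    rw [Finset.prod_ne_zero_iff]
    intro i _
    rw [hD n hn i i, if_pos le_rfl]
    have : N + (i:ℕ) - (i:ℕ) = N := by omega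
    rw [this]
    apply hcN
    have : (0:ℤ) ≤ n * N := mul_nonneg (by omega) (by positivity)
    omega
  · -- Hermitian
    intro n hn
    ext i l
    rw [Matrix.conjTranspose_apply, hE n hn l i, hE n hn i l]
    rcases lt_trichotomy (i : ℕ) (l : ℕ) with h | h | h
    · rw [if_pos (show (i:ℕ) ≤ (l:ℕ) from le_of_lt h), if_neg (show ¬((l:ℕ) ≤ (i:ℕ)) by omega)]
      simp only [starRingEnd_apply, star_star]
    · have hli : (l : ℕ) = (i : ℕ) := h.symm
      rw [if_pos (show (i:ℕ) ≤ (l:ℕ) by omega), if_pos (show (l:ℕ) ≤ (i:ℕ) by omega)]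
      have h0 : (i:ℕ) - (l:ℕ) = 0 := by omega
      have h0' : (l:ℕ) - (i:ℕ) = 0 := by omega
      rw [h0, h0', hli]
      have hr : (starRingEnd ℂ) (c (n * N + (i:ℕ)) 0) = c (n * N + (i:ℕ)) 0 :=
        Complex.conj_eq_iff_im.mpr (hc0 _
          (add_nonneg (mul_nonneg hn (Int.natCast_nonneg N)) (Int.natCast_nonneg _)))
      rw [hr]
      simpa only [starRingEnd_apply] using hr
    · rw [if_neg (show ¬((i:ℕ) ≤ (l:ℕ)) by omega), if_pos (show (l:ℕ) ≤ (i:ℕ) from le_of_lt h)]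
      rfl
  · -- recurrence
    intro n hn
    set Q : ℤ → ℕ → Polynomial ℂ := fun t a => if 0 ≤ t then q t a else 0 with hQdef
    have hdecomp : ∀ t : ℤ, p t = ∑ m ∈ Finset.range N, X ^ m * (Q t m).comp (X ^ N) := by
      intro t
      by_cases ht : 0 ≤ t
      · simp only [hQdef, if_pos ht]
        exact hq t ht
      · rw [hpneg t (by omega)]
        simp only [hQdef, if_neg ht]
        simp
    have key : ∀ t : ℤ, 0 ≤ t → ∀ a : ℕ, a < N →
        X * Q t a = C (c t 0) * Q t a + ∑ k ∈ Finset.Icc 1 N,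
          (C (starRingEnd ℂ (c t k)) * Q (t - k) a + C (c (t + k) k) * Q (t + k) a) := by
      intro t ht a ha
      refine aux_unique N hN' (fun m => X * Q t m)
        (fun m => C (c t 0) * Q t m + ∑ k ∈ Finset.Icc 1 N,
          (C (starRingEnd ℂ (c t k)) * Q (t - k) m + C (c (t + k) k) * Q (t + k) m)) ?_ a ha
      have lhs_eq : ∑ m ∈ Finset.range N, X ^ m * (X * Q t m).comp (X ^ N) = X ^ N * p t := by
        rw [hdecomp t, Finset.mul_sum]
        refine Finset.sum_congr rfl fun m _ => ?_
        rw [mul_comp, X_comp]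
        ring
      have rhs_eq : ∑ m ∈ Finset.range N, X ^ m *
          ((fun m => C (c t 0) * Q t m + ∑ k ∈ Finset.Icc 1 N,
            (C (starRingEnd ℂ (c t k)) * Q (t - k) m + C (c (t + k) k) * Q (t + k) m)) m).comp (X ^ N)
          = C (c t 0) * p t + ∑ k ∈ Finset.Icc 1 N,
            (C (starRingEnd ℂ (c t k)) * p (t - k) + C (c (t + k) k) * p (t + k)) := by
        simp only [add_comp, mul_comp, C_comp, Polynomial.sum_comp, mul_add, Finset.mul_sum,
          Finset.sum_add_distrib]
        have c1 : ∑ x ∈ Finset.range N, X ^ x * (C (c t 0) * (Q t x).comp (X ^ N))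
            = C (c t 0) * p t := by
          rw [hdecomp t, Finset.mul_sum]
          exact Finset.sum_congr rfl fun m _ => by ring
        have c2 : ∑ x ∈ Finset.range N, ∑ i ∈ Finset.Icc 1 N,
              X ^ x * (C (starRingEnd ℂ (c t i)) * (Q (t - i) x).comp (X ^ N))
            = ∑ i ∈ Finset.Icc 1 N, C (starRingEnd ℂ (c t i)) * p (t - i) := by
          rw [Finset.sum_comm]
          refine Finset.sum_congr rfl fun k _ => ?_
          rw [hdecomp (t - k), Finset.mul_sum]
          exact Finset.sum_congr rfl fun m _ => by ring
        have c3 : ∑ x ∈ Finset.range N, ∑ i ∈ Finset.Icc 1 N,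
              X ^ x * (C (c (t + i) i) * (Q (t + i) x).comp (X ^ N))
            = ∑ i ∈ Finset.Icc 1 N, C (c (t + i) i) * p (t + i) := by
          rw [Finset.sum_comm]
          refine Finset.sum_congr rfl fun k _ => ?_
          rw [hdecomp (t + k), Finset.mul_sum]
          exact Finset.sum_congr rfl fun m _ => by ring
        rw [c1, c2, c3]
      rw [lhs_eq, rhs_eq]
      exact hrec t ht
    refine Matrix.ext fun m j => ?_
    have hm : (m : ℕ) < N := m.isLt
    have hj : (j : ℕ) < N := j.isLt
    have hnN : (0:ℤ) ≤ n * N := mul_nonneg hn (Int.natCast_nonneg N)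
    have hn'0 : (0:ℤ) ≤ n * N + (m : ℕ) := by omega
    have hQP : ∀ t : ℤ, 0 ≤ t → ∀ l : Fin N, P t l j = Q (t * N + (l : ℕ)) j := by
      intro t ht l
      rw [hP t ht l j]
      have h0 : (0:ℤ) ≤ t * N + (l : ℕ) := by
        have : (0:ℤ) ≤ t * N := mul_nonneg ht (Int.natCast_nonneg N)
        omega
      simp only [hQdef, if_pos h0]
    have hQneg : ∀ t : ℤ, t < 0 → Q t (j : ℕ) = 0 := by
      intro t ht
      simp only [hQdef, if_neg (by omega : ¬ (0:ℤ) ≤ t)]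
    simp only [Matrix.smul_apply, Matrix.add_apply, Matrix.mul_apply, Matrix.map_apply,
      Matrix.conjTranspose_apply, smul_eq_mul]
    rw [hQP n hn m]
    rw [key (n * N + (m : ℕ)) hn'0 (j : ℕ) hj]
    -- abbreviations
    set M : ℕ := (m : ℕ) with hM
    set n' : ℤ := n * N + (M : ℕ) with hn'
    -- the three matrix sums
    have hS1 : (∑ x : Fin N, C (D (n + 1) m x) * P (n + 1) x j)
        = ∑ k ∈ Finset.Ico (N - M) (N + 1), C (c (n' + k) k) * Q (n' + k) (j : ℕ) := by
      have hent : ∀ x : Fin N, C (D (n + 1) m x) * P (n + 1) x j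
          = (fun l : ℕ => C (if l ≤ M then c ((n + 1) * N + l) (N + l - M) else 0)
              * Q ((n + 1) * N + l) (j : ℕ)) (x : ℕ) := by
        intro x
        rw [hD (n + 1) (by omega) m x, hQP (n + 1) (by omega) x]
      rw [Finset.sum_congr rfl fun x _ => hent x,
        Fin.sum_univ_eq_sum_range (fun l : ℕ => C (if l ≤ M then c ((n + 1) * N + l) (N + l - M) else 0)
              * Q ((n + 1) * N + l) (j : ℕ)) N,
        Finset.sum_Ico_eq_sum_range]
      have hr : N + 1 - (N - M) = M + 1 := by omega
      rw [hr]
      rw [← Finset.sum_subset (Finset.range_subset_range.mpr (show M + 1 ≤ N by omega))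
        (fun x _ hx => by
          rw [if_neg (by simp only [Finset.mem_range] at hx ⊢; omega), map_zero, zero_mul])]
      refine Finset.sum_congr rfl fun i hi => ?_
      simp only [Finset.mem_range] at hi
      rw [if_pos (show i ≤ M by omega)]
      rw [show N - M + i = N + i - M from by omega]
      rw [show (n' + ((N + i - M : ℕ) : ℤ)) = (n + 1) * N + (i : ℕ) from by
        have hcast : ((N + i - M : ℕ) : ℤ) = (N : ℤ) + i - M := by omega
        rw [hn', hcast]; ring]
    have hS3 : (∑ x : Fin N, C (star (D n x m)) * P (n - 1) x j)
        = ∑ k ∈ Finset.Ico (M + 1) (N + 1), C (starRingEnd ℂ (c n' k)) * Q (n' - k) (j : ℕ) := by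
      by_cases hn1 : 1 ≤ n
      · have hent : ∀ x : Fin N, C (star (D n x m)) * P (n - 1) x j
            = (fun l : ℕ => C (if M ≤ l then starRingEnd ℂ (c n' (N + M - l)) else 0)
                * Q ((n - 1) * N + l) (j : ℕ)) (x : ℕ) := by
          intro x
          rw [hD n hn1 x m, hQP (n - 1) (by omega) x, apply_ite star, star_zero]
          rfl
        rw [Finset.sum_congr rfl fun x _ => hent x,
          Fin.sum_univ_eq_sum_range (fun l : ℕ => C (if M ≤ l then starRingEnd ℂ (c n' (N + M - l)) else 0)
                * Q ((n - 1) * N + l) (j : ℕ)) N,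
          Finset.sum_Ico_eq_sum_range]
        have hr : N + 1 - (M + 1) = N - M := by omega
        rw [hr]
        rw [← Finset.sum_range_reflect (fun i => C (starRingEnd ℂ (c n' (M + 1 + i)))
            * Q (n' - (M + 1 + i : ℕ)) (j : ℕ)) (N - M)]
        rw [← Finset.sum_subset
          (show Finset.Ico M N ⊆ Finset.range N from fun x hx =>
            Finset.mem_range.mpr (Finset.mem_Ico.mp hx).2)
          (fun x hx hx2 => by
            simp only [Finset.mem_range] at hx
            simp only [Finset.mem_Ico] at hx2
            rw [if_neg (by omega), map_zero, zero_mul])]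
        rw [Finset.sum_Ico_eq_sum_range]
        refine Finset.sum_congr rfl fun i hi => ?_
        simp only [Finset.mem_range] at hi
        rw [if_pos (show M ≤ M + i by omega)]
        rw [show M + 1 + (N - M - 1 - i) = N - i from by omega]
        rw [show N + M - (M + i) = N - i from by omega]
        rw [show n' - ((N - i : ℕ) : ℤ) = (n - 1) * N + ((M + i : ℕ) : ℤ) from by
          have h1 : ((N - i : ℕ) : ℤ) = (N : ℤ) - i := by omega
          have h2 : ((M + i : ℕ) : ℤ) = (M : ℤ) + i := by omega
          rw [hn', h1, h2]; ring]
      · -- n = 0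
        have hn0 : n = 0 := by omega
        have hz1 : (∑ x : Fin N, C (star (D n x m)) * P (n - 1) x j) = 0 := by
          refine Finset.sum_eq_zero fun x _ => ?_
          rw [hn0]
          show C (star (D 0 x m)) * P (0 - 1) x j = 0
          rw [show (0:ℤ) - 1 = -1 from by norm_num, hPneg]
          simp
        have hz2 : (∑ k ∈ Finset.Ico (M + 1) (N + 1),
            C (starRingEnd ℂ (c n' k)) * Q (n' - k) (j : ℕ)) = 0 := by
          refine Finset.sum_eq_zero fun k hk => ?_
          simp only [Finset.mem_Ico] at hk
          rw [hQneg (n' - k) (by rw [hn', hn0]; push_cast; omega), mul_zero]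
        rw [hz1, hz2]
    have hS2 : (∑ x : Fin N, C (E n m x) * P n x j)
        = (∑ k ∈ Finset.Ico 1 (M + 1), C (starRingEnd ℂ (c n' k)) * Q (n' - k) (j : ℕ))
          + (C (c n' 0) * Q n' (j : ℕ)
          + ∑ k ∈ Finset.Ico 1 (N - M), C (c (n' + k) k) * Q (n' + k) (j : ℕ)) := by
      have hent : ∀ x : Fin N, C (E n m x) * P n x j
          = (fun l : ℕ => C (if l ≤ M then starRingEnd ℂ (c n' (M - l)) else c (n * N + l) (l - M))
              * Q (n * N + l) (j : ℕ)) (x : ℕ) := by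
        intro x
        rw [hE n hn m x, hQP n hn x]
      rw [Finset.sum_congr rfl fun x _ => hent x,
        Fin.sum_univ_eq_sum_range (fun l : ℕ => C (if l ≤ M then starRingEnd ℂ (c n' (M - l)) else c (n * N + l) (l - M))
              * Q (n * N + l) (j : ℕ)) N, Finset.range_eq_Ico,
        ← Finset.sum_Ico_consecutive _ (show 0 ≤ M by omega) (show M ≤ N by omega),
        ← Finset.sum_Ico_consecutive _ (show M ≤ M + 1 by omega) (show M + 1 ≤ N by omega),
        Nat.Ico_succ_singleton, Finset.sum_singleton]
      congr 1
      · -- low part: l < M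
        rw [← Finset.range_eq_Ico, Finset.sum_Ico_eq_sum_range,
          show M + 1 - 1 = M from by omega,
          ← Finset.sum_range_reflect (fun i => C (starRingEnd ℂ (c n' (1 + i)))
            * Q (n' - (1 + i : ℕ)) (j : ℕ)) M]
        refine Finset.sum_congr rfl fun l hl => ?_
        simp only [Finset.mem_range] at hl
        rw [if_pos (show l ≤ M by omega)]
        rw [show 1 + (M - 1 - l) = M - l from by omega]
        rw [show n' - ((M - l : ℕ) : ℤ) = n * N + (l : ℕ) from by
          have h1 : ((M - l : ℕ) : ℤ) = (M : ℤ) - l := by omega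
          rw [hn', h1]; ring]
      · congr 1
        · -- diagonal: l = M
          rw [if_pos le_rfl, show M - M = 0 from by omega]
          have hr : (starRingEnd ℂ) (c n' 0) = c n' 0 :=
            Complex.conj_eq_iff_im.mpr (hc0 n' hn'0)
          rw [hr]
        · -- high part: l > M
          rw [Finset.sum_Ico_eq_sum_range, Finset.sum_Ico_eq_sum_range,
            show N - M - 1 = N - (M + 1) from by omega]
          refine Finset.sum_congr rfl fun i hi => ?_
          simp only [Finset.mem_range] at hi
          rw [if_neg (show ¬ (M + 1 + i ≤ M) by omega)]
          rw [show M + 1 + i - M = 1 + i from by omega]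
          rw [show n' + ((1 + i : ℕ) : ℤ) = n * N + ((M + 1 + i : ℕ) : ℤ) from by
            have h1 : ((1 + i : ℕ) : ℤ) = 1 + (i : ℤ) := by omega
            have h2 : ((M + 1 + i : ℕ) : ℤ) = (M : ℤ) + 1 + i := by omega
            rw [hn', h1, h2]; ring]
    rw [hS1, hS2, hS3]
    -- split the Icc sums
    rw [Finset.sum_add_distrib, ← Finset.Ico_add_one_right_eq_Icc,
      ← Finset.sum_Ico_consecutive (fun k => C (starRingEnd ℂ (c n' k)) * Q (n' - k) (j : ℕ))
        (show 1 ≤ M + 1 by omega) (show M + 1 ≤ N + 1 by omega),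
      ← Finset.sum_Ico_consecutive (fun k => C (c (n' + k) k) * Q (n' + k) (j : ℕ))
        (show 1 ≤ N - M by omega) (show N - M ≤ N + 1 by omega)]
    ring
end

section
/- Let N ≥ 1 and for each n ≥ 0 let P_n be an N×N matrix polynomial over ℂ such that every entry of P_n has degree at most n and the matrix of coefficients of x^n in P_n (the leading coefficient) is lower triangular with nonzero diagonal entries; set P_{−1} = 0. Suppose there are N×N complex matrices D_n (n ≥ 1), lower triangular with nonzero determinant, and Hermitian N×N complex matrices E_n (n ≥ 0) such that x P_n(x) = D_{n+1} P_{n+1}(x) + E_n P_n(x) + D_n^* P_{n−1}(x) for all n ≥ 0. Define scalar polynomials p_{nN+m}(x) = Σ_{j=0}^{N−1} x^j (P_n)_{m,j}(x^N) for n ≥ 0 and 0 ≤ m ≤ N−1. Then deg p_k = k for every k ≥ 0, and there exist real numbers c_{n,0} and complex numbers c_{n,k} (1 ≤ k ≤ N) with c_{n,N} ≠ 0 for every n such that, with p_m = 0 for m < 0, x^N p_n(x) = c_{n,0} p_n(x) + Σ_{k=1}^{N} ( conj(c_{n,k}) p_{n−k}(x) + c_{n+k,k} p_{n+k}(x) )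 for all n ≥ 0. -/
open Polynomial Finset

set_option maxRecDepth 16000 in
set_option maxHeartbeats 2000000 in
/-- Converse direction: if matrix polynomials `P_n` (entries of degree at most `n`, leading
coefficient lower triangular with nonzero diagonal) satisfy a matrix three-term recurrence
`x P_n = D_{n+1} P_{n+1} + E_n P_n + D_n^* P_{n-1}` with `D_n` lower triangular invertible and
`E_n` Hermitian, then the scalar polynomials `p_{nN+m}(x) = ∑_j x^j (P_n)_{m,j}(x^N)` have exact
degree and satisfy a `(2N+1)`-term recurrence with `c_{n,0}` real and `c_{n,N} ≠ 0`. -/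
theorem stmt5 (N : ℕ) (hN : 1 ≤ N)
    (P : ℕ → Matrix (Fin N) (Fin N) (Polynomial ℂ))
    (hdeg : ∀ (n : ℕ) (m j : Fin N), (P n m j).natDegree ≤ n)
    (hleadtri : ∀ (n : ℕ) (m j : Fin N), (m : ℕ) < (j : ℕ) → (P n m j).coeff n = 0)
    (hleaddiag : ∀ (n : ℕ) (m : Fin N), (P n m m).coeff n ≠ 0)
    (D : ℕ → Matrix (Fin N) (Fin N) ℂ)
    (hDlow : ∀ n : ℕ, 1 ≤ n → ∀ i l : Fin N, (i : ℕ) < (l : ℕ) → D n i l = 0)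
    (hDdet : ∀ n : ℕ, 1 ≤ n → (D n).det ≠ 0)
    (E : ℕ → Matrix (Fin N) (Fin N) ℂ)
    (hE : ∀ n : ℕ, (E n).conjTranspose = E n)
    (hrec : ∀ n : ℕ,
      (X : Polynomial ℂ) • P n =
        (D (n + 1)).map C * P (n + 1) + (E n).map C * P n +
          (if n = 0 then 0 else ((D n).conjTranspose).map C * P (n - 1)))
    (p : ℕ → Polynomial ℂ)
    (hp : ∀ (n : ℕ) (m : Fin N),
      p (n * N + (m : ℕ)) = ∑ j : Fin N, X ^ (j : ℕ) * (P n m j).comp (X ^ N)) :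
    (∀ k : ℕ, (p k).degree = (k : ℕ)) ∧
    ∃ c : ℕ → ℕ → ℂ, (∀ n, (c n 0).im = 0) ∧ (∀ n, c n N ≠ 0) ∧
      ∀ n : ℕ, X ^ N * p n = C (c n 0) * p n + ∑ k ∈ Finset.Icc 1 N,
        ((if k ≤ n then C (starRingEnd ℂ (c n k)) * p (n - k) else 0) +
          C (c (n + k) k) * p (n + k)) := by
  classical
  have hN0 : 0 < N := hN
  set ind : ℕ → Fin N := fun t => ⟨t % N, Nat.mod_lt _ hN0⟩ with hind
  have hind_coe : ∀ l : Fin N, ind (l : ℕ) = l := fun l => Fin.ext (Nat.mod_eq_of_lt l.isLt)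
  have hind_eq : ∀ s t : ℕ, s % N = t % N → ind s = ind t := fun s t h => Fin.ext h
  have hdivmod : ∀ a r : ℕ, r < N → (a * N + r) / N = a ∧ (a * N + r) % N = r := by
    intro a r hr
    constructor
    · rw [add_comm, Nat.add_mul_div_right _ _ hN0, Nat.div_eq_of_lt hr, zero_add]
    · rw [add_comm, Nat.add_mul_mod_self_right, Nat.mod_eq_of_lt hr]
  have hp' : ∀ i : ℕ, p i = ∑ j : Fin N, X ^ (j : ℕ) * expand ℂ N (P (i / N) (ind i) j) := by
    intro i
    have h1 : (i / N) * N + ((ind i : ℕ)) = i := by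
      show i / N * N + i % N = i
      rw [mul_comm]; exact Nat.div_add_mod i N
    have h2 := hp (i / N) (ind i)
    rw [h1] at h2
    simpa [expand_eq_comp_X_pow] using h2
  -- the degree statement
  have hdegree : ∀ i : ℕ, (p i).degree = (i : ℕ) := by
    intro i
    have hmN : i % N < N := Nat.mod_lt _ hN0
    have him : i / N * N + i % N = i := by rw [mul_comm]; exact Nat.div_add_mod i N
    have hcoeff : (p i).coeff i ≠ 0 := by
      rw [hp' i, finset_sum_coeff]
      have h1 : ∀ j : Fin N,
          (X ^ (j : ℕ) * expand ℂ N (P (i / N) (ind i) j)).coeff i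
            = if j = ind i then (P (i / N) (ind i) j).coeff (i / N) else 0 := by
        intro j
        rw [mul_comm, coeff_mul_X_pow']
        by_cases hj : j = ind i
        · rw [if_pos hj, hj]
          have hji : ((ind i : ℕ)) ≤ i := Nat.mod_le i N
          rw [if_pos hji, coeff_expand hN0]
          have hsub : i - (ind i : ℕ) = i / N * N := by
            show i - i % N = i / N * N
            omega
          have hdvd : N ∣ i - (ind i : ℕ) := by
            rw [hsub]; exact Dvd.intro _ (mul_comm _ _)
          rw [if_pos hdvd, hsub, Nat.mul_div_cancel _ hN0]
        · rw [if_neg hj]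
          split_ifs with hle
          · rw [coeff_expand hN0]
            split_ifs with hdvd
            · exfalso
              obtain ⟨t, ht⟩ := hdvd
              have h3 : i = N * t + (j : ℕ) := by omega
              have h4 : (j : ℕ) = i % N := by
                rw [h3, Nat.mul_add_mod, Nat.mod_eq_of_lt j.isLt]
              exact hj (Fin.ext h4)
            · rfl
          · rfl
      rw [Finset.sum_congr rfl fun j _ => h1 j,
        Finset.sum_ite_eq' Finset.univ (ind i) fun j => (P (i / N) (ind i) j).coeff (i / N),
        if_pos (Finset.mem_univ _)]
      exact hleaddiag (i / N) (ind i)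
    have hnd : (p i).natDegree ≤ i := by
      rw [hp' i]
      refine natDegree_sum_le_of_forall_le _ _ fun j _ => ?_
      by_cases hz : P (i / N) (ind i) j = 0
      · simp [hz]
      have hb : (X ^ (j : ℕ) * expand ℂ N (P (i / N) (ind i) j)).natDegree
          ≤ (j : ℕ) + (P (i / N) (ind i) j).natDegree * N := by
        refine natDegree_mul_le.trans ?_
        rw [natDegree_X_pow, natDegree_expand]
      refine hb.trans ?_
      have h6 : (j : ℕ) < N := j.isLt
      rcases le_or_gt (j : ℕ) (i % N) with hle | hlt
      · have h2 : (P (i / N) (ind i) j).natDegree * N ≤ (i / N) * N :=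
          Nat.mul_le_mul_right N (hdeg (i / N) (ind i) j)
        linarith
      · have h0 : (P (i / N) (ind i) j).coeff (i / N) = 0 := hleadtri _ _ _ hlt
        have h3 : (P (i / N) (ind i) j).natDegree ≠ i / N := by
          intro h
          apply hz
          refine leadingCoeff_eq_zero.mp ?_
          rw [leadingCoeff, h]
          exact h0
        have h4 : (P (i / N) (ind i) j).natDegree + 1 ≤ i / N := by
          have := hdeg (i / N) (ind i) j; omega
        have h5 : ((P (i / N) (ind i) j).natDegree + 1) * N ≤ (i / N) * N :=
          Nat.mul_le_mul_right N h4
        have h7 : (i / N) * N ≤ i := Nat.div_mul_le_self i N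
        have h8 : (P (i / N) (ind i) j).natDegree * N + N
            = ((P (i / N) (ind i) j).natDegree + 1) * N := by ring
        linarith
    exact degree_eq_of_le_of_coeff_ne_zero
      (degree_le_natDegree.trans (by exact_mod_cast hnd)) hcoeff
  refine ⟨hdegree, ?_⟩
  set c : ℕ → ℕ → ℂ := fun j k =>
    if k = 0 then E (j / N) (ind j) (ind j)
    else if k ≤ j % N then E (j / N) (ind (j % N - k)) (ind j)
    else if k ≤ j ∧ k ≤ N then D (j / N) (ind (j % N + N - k)) (ind j)
    else 1 with hc
  have hEentry : ∀ (a : ℕ) (s t : Fin N), starRingEnd ℂ (E a s t) = E a t s := by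
    intro a s t
    have := congrFun (congrFun (hE a) t) s
    rw [Matrix.conjTranspose_apply] at this
    rw [← this]
    rfl
  refine ⟨c, ?_, ?_, ?_⟩
  · intro n
    have h1 : c n 0 = E (n / N) (ind n) (ind n) := by simp only [hc, if_pos rfl]
    rw [h1]
    have h2 := hEentry (n / N) (ind n) (ind n)
    have h3 : (starRingEnd ℂ) (E (n / N) (ind n) (ind n)) = E (n / N) (ind n) (ind n) := h2
    exact Complex.conj_eq_iff_im.mp h3
  · intro n
    by_cases hn : N ≤ n
    · have h1 : c n N = D (n / N) (ind (n % N + N - N)) (ind n) := by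
        simp only [hc]
        rw [if_neg (by omega), if_neg (by have := Nat.mod_lt n hN0; omega),
          if_pos ⟨hn, le_refl N⟩]
      rw [h1]
      have h2 : ind (n % N + N - N) = ind n := hind_eq _ _ (by simp)
      rw [h2]
      have h3 : 1 ≤ n / N := Nat.one_le_div_iff hN0 |>.mpr hn
      have h4 := hDdet (n / N) h3
      rw [Matrix.det_of_lowerTriangular (D (n / N))
        (fun s t hst => hDlow (n / N) h3 s t (by exact hst))] at h4
      intro h0
      apply h4
      exact Finset.prod_eq_zero (Finset.mem_univ (ind n)) h0
    · have h1 : c n N = 1 := by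
        simp only [hc]
        rw [if_neg (by omega), if_neg (by have := Nat.mod_lt n hN0; omega),
          if_neg (by omega)]
      rw [h1]; exact one_ne_zero
  · intro i
    set nb := i / N with hnb
    set m := i % N with hm
    have hmN : m < N := Nat.mod_lt _ hN0
    have him : nb * N + m = i := by rw [mul_comm]; exact Nat.div_add_mod i N
    have hpl : ∀ (a : ℕ) (l : Fin N),
        p (a * N + (l : ℕ)) = ∑ j : Fin N, X ^ (j : ℕ) * expand ℂ N (P a l j) := by
      intro a l
      have h2 := hp a l
      simpa [expand_eq_comp_X_pow] using h2
    -- the key identity coming from the matrix recurrence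
    have key : X ^ N * p i =
        ((∑ l : Fin N, C (D (nb + 1) (ind i) l) * p ((nb + 1) * N + (l : ℕ))) +
          (∑ l : Fin N, C (E nb (ind i) l) * p (nb * N + (l : ℕ)))) +
          (if nb = 0 then 0 else
            ∑ l : Fin N, C ((starRingEnd ℂ) (D nb l (ind i))) * p ((nb - 1) * N + (l : ℕ))) := by
      have entry : ∀ j : Fin N, X * P nb (ind i) j =
          ((∑ l : Fin N, C (D (nb + 1) (ind i) l) * P (nb + 1) l j) +
            (∑ l : Fin N, C (E nb (ind i) l) * P nb l j)) +
            (if nb = 0 then 0 else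
              ∑ l : Fin N, C ((starRingEnd ℂ) (D nb l (ind i))) * P (nb - 1) l j) := by
        intro j
        have h := congrFun (congrFun (hrec nb) (ind i)) j
        by_cases h0 : nb = 0
        · rw [if_pos h0]
          rw [if_pos h0] at h
          simpa [Matrix.mul_apply, Matrix.map_apply, Matrix.smul_apply, smul_eq_mul,
            Matrix.add_apply, Matrix.zero_apply] using h
        · rw [if_neg h0]
          rw [if_neg h0] at h
          simp only [Matrix.add_apply, Matrix.mul_apply, Matrix.map_apply, Matrix.smul_apply,
            smul_eq_mul, Matrix.conjTranspose_apply] at h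
          simp only [starRingEnd_apply]
          exact h
      have swap : ∀ (a : Fin N → ℂ) (b : ℕ),
          (∑ j : Fin N, X ^ (j : ℕ) * expand ℂ N (∑ l : Fin N, C (a l) * P b l j))
            = ∑ l : Fin N, C (a l) * p (b * N + (l : ℕ)) := by
        intro a b
        simp_rw [map_sum, map_mul, expand_C, hpl, Finset.mul_sum]
        rw [Finset.sum_comm]
        exact Finset.sum_congr rfl fun l _ => Finset.sum_congr rfl fun j _ => by ring
      calc X ^ N * p i = ∑ j : Fin N, X ^ (j : ℕ) * expand ℂ N (X * P nb (ind i) j) := by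
            rw [hp' i, Finset.mul_sum]
            exact Finset.sum_congr rfl fun j _ => by rw [map_mul, expand_X]; ring
        _ = _ := by
            simp_rw [entry]
            by_cases h0 : nb = 0
            · rw [if_pos h0]
              simp only [if_pos h0, add_zero]
              simp_rw [map_add, mul_add]
              rw [Finset.sum_add_distrib,
                swap (fun l => D (nb + 1) (ind i) l) (nb + 1),
                swap (fun l => E nb (ind i) l) nb]
            · rw [if_neg h0]
              simp only [if_neg h0]
              simp_rw [map_add, mul_add]
              rw [Finset.sum_add_distrib, Finset.sum_add_distrib,
                swap (fun l => D (nb + 1) (ind i) l) (nb + 1),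
                swap (fun l => E nb (ind i) l) nb,
                swap (fun l => (starRingEnd ℂ) (D nb l (ind i))) (nb - 1)]
    rw [key]
    have hmi : m ≤ i := by have := Nat.mod_le i N; omega
    have hindmi : ind m = ind i := hind_eq _ _ (by rw [Nat.mod_eq_of_lt hmN, hm])
    -- split the goal sum into four pieces
    have hsum_split : (∑ k ∈ Finset.Icc 1 N,
          ((if k ≤ i then C ((starRingEnd ℂ) (c i k)) * p (i - k) else 0) +
            C (c (i + k) k) * p (i + k)))
        = ((∑ k ∈ Finset.Icc 1 N, if k ≤ m then C ((starRingEnd ℂ) (c i k)) * p (i - k) else 0) +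
           (∑ k ∈ Finset.Icc 1 N, if m < k ∧ k ≤ i then C ((starRingEnd ℂ) (c i k)) * p (i - k) else 0)) +
          ((∑ k ∈ Finset.Icc 1 N, if m + k < N then C (c (i + k) k) * p (i + k) else 0) +
           (∑ k ∈ Finset.Icc 1 N, if N ≤ m + k then C (c (i + k) k) * p (i + k) else 0)) := by
      rw [Finset.sum_add_distrib]
      congr 1
      · rw [← Finset.sum_add_distrib]
        refine Finset.sum_congr rfl fun k hk => ?_
        split_ifs <;> first | (exfalso; omega) | ring
      · rw [← Finset.sum_add_distrib]
        refine Finset.sum_congr rfl fun k hk => ?_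
        simp only [Finset.mem_Icc] at hk
        split_ifs <;> first | (exfalso; omega) | ring
    rw [hsum_split]
    have hconv : ∀ F : ℕ → Polynomial ℂ,
        (∑ l : Fin N, F (l : ℕ)) = ∑ l ∈ Finset.range N, F l := fun F =>
      Fin.sum_univ_eq_sum_range F N
    have hrangesplit : ∀ F : ℕ → Polynomial ℂ, (∑ l ∈ Finset.range N, F l)
        = ((∑ l ∈ Finset.range m, F l) + F m) + ∑ l ∈ Finset.Ico (m + 1) N, F l := by
      intro F
      rw [Finset.range_eq_Ico,
        ← Finset.sum_Ico_consecutive F (Nat.zero_le (m + 1)) (by omega : m + 1 ≤ N),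
        ← Finset.range_eq_Ico, Finset.sum_range_succ]
    -- claim A : the E-part
    have claimA : (C (c i 0) * p i
        + (∑ k ∈ Finset.Icc 1 N, if k ≤ m then C ((starRingEnd ℂ) (c i k)) * p (i - k) else 0))
        + (∑ k ∈ Finset.Icc 1 N, if m + k < N then C (c (i + k) k) * p (i + k) else 0)
        = ∑ l : Fin N, C (E nb (ind i) l) * p (nb * N + (l : ℕ)) := by
      have hSE : (∑ l : Fin N, C (E nb (ind i) l) * p (nb * N + (l : ℕ)))
          = ∑ l ∈ Finset.range N, C (E nb (ind i) (ind l)) * p (nb * N + l) := by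
        rw [← hconv fun l => C (E nb (ind i) (ind l)) * p (nb * N + l)]
        exact Finset.sum_congr rfl fun l _ => by rw [hind_coe]
      have e0 : C (c i 0) * p i = C (E nb (ind i) (ind m)) * p (nb * N + m) := by
        have h1 : c i 0 = E nb (ind i) (ind i) := by
          simp only [hc]
          rw [if_pos trivial, ← hnb]
        rw [h1, hindmi, him]
      have e1 : (∑ k ∈ Finset.Icc 1 N, if k ≤ m then C ((starRingEnd ℂ) (c i k)) * p (i - k) else 0)
          = ∑ l ∈ Finset.range m, C (E nb (ind i) (ind l)) * p (nb * N + l) := by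
        rw [← Finset.sum_filter]
        refine Finset.sum_nbij' (fun k => m - k) (fun l => m - l) ?_ ?_ ?_ ?_ ?_
        · intro k hk; simp only [Finset.mem_filter, Finset.mem_Icc] at hk
          simp only [Finset.mem_range]; omega
        · intro l hl; simp only [Finset.mem_range] at hl
          simp only [Finset.mem_filter, Finset.mem_Icc]; omega
        · intro k hk; simp only [Finset.mem_filter, Finset.mem_Icc] at hk; omega
        · intro l hl; simp only [Finset.mem_range] at hl; omega
        · intro k hk
          simp only [Finset.mem_filter, Finset.mem_Icc] at hk
          have hcv : c i k = E nb (ind (m - k)) (ind i) := by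
            simp only [hc]
            rw [← hm, ← hnb, if_neg (by omega : ¬ k = 0), if_pos hk.2]
          rw [hcv, hEentry]
          have hidx : i - k = nb * N + (m - k) := by omega
          rw [hidx]
      have e2 : (∑ k ∈ Finset.Icc 1 N, if m + k < N then C (c (i + k) k) * p (i + k) else 0)
          = ∑ l ∈ Finset.Ico (m + 1) N, C (E nb (ind i) (ind l)) * p (nb * N + l) := by
        rw [← Finset.sum_filter]
        refine Finset.sum_nbij' (fun k => m + k) (fun l => l - m) ?_ ?_ ?_ ?_ ?_
        · intro k hk; simp only [Finset.mem_filter, Finset.mem_Icc] at hk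
          simp only [Finset.mem_Ico]; omega
        · intro l hl; simp only [Finset.mem_Ico] at hl
          simp only [Finset.mem_filter, Finset.mem_Icc]; omega
        · intro k hk; simp only [Finset.mem_filter, Finset.mem_Icc] at hk; omega
        · intro l hl; simp only [Finset.mem_Ico] at hl; omega
        · intro k hk
          simp only [Finset.mem_filter, Finset.mem_Icc] at hk
          have hik : i + k = nb * N + (m + k) := by omega
          have hmod : (i + k) % N = m + k := by
            rw [hik]; exact (hdivmod nb (m + k) (by omega)).2
          have hdiv : (i + k) / N = nb := by
            rw [hik]; exact (hdivmod nb (m + k) (by omega)).1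
          have hcv : c (i + k) k = E nb (ind i) (ind (m + k)) := by
            simp only [hc]
            rw [hmod, hdiv, if_neg (by omega : ¬ k = 0), if_pos (by omega : k ≤ m + k),
              show m + k - k = m from by omega,
              hind_eq (i + k) (m + k) (by rw [hmod, Nat.mod_eq_of_lt (by omega : m + k < N)]),
              hindmi]
          rw [hcv, hik]
      rw [hSE, hrangesplit, ← e0, ← e1, ← e2]
      ring
    -- claim B : the D_{n+1}-part
    have claimB : (∑ k ∈ Finset.Icc 1 N, if N ≤ m + k then C (c (i + k) k) * p (i + k) else 0)
        = ∑ l : Fin N, C (D (nb + 1) (ind i) l) * p ((nb + 1) * N + (l : ℕ)) := by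
      have hSD : (∑ l : Fin N, C (D (nb + 1) (ind i) l) * p ((nb + 1) * N + (l : ℕ)))
          = ∑ l ∈ Finset.range N, C (D (nb + 1) (ind i) (ind l)) * p ((nb + 1) * N + l) := by
        rw [← hconv fun l => C (D (nb + 1) (ind i) (ind l)) * p ((nb + 1) * N + l)]
        exact Finset.sum_congr rfl fun l _ => by rw [hind_coe]
      rw [hSD, hrangesplit]
      have hz : (∑ l ∈ Finset.Ico (m + 1) N,
          C (D (nb + 1) (ind i) (ind l)) * p ((nb + 1) * N + l)) = 0 := by
        refine Finset.sum_eq_zero fun l hl => ?_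
        simp only [Finset.mem_Ico] at hl
        have hD0 : D (nb + 1) (ind i) (ind l) = 0 := by
          refine hDlow (nb + 1) (Nat.le_add_left 1 nb) _ _ ?_
          show i % N < l % N
          rw [← hm, Nat.mod_eq_of_lt (by omega : l < N)]
          omega
        rw [hD0, map_zero, zero_mul]
      rw [hz, add_zero,
        ← Finset.sum_range_succ (fun l => C (D (nb + 1) (ind i) (ind l)) * p ((nb + 1) * N + l)) m,
        ← Finset.sum_filter]
      refine Finset.sum_nbij' (fun k => m + k - N) (fun l => l + N - m) ?_ ?_ ?_ ?_ ?_
      · intro k hk; simp only [Finset.mem_filter, Finset.mem_Icc] at hk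
        simp only [Finset.mem_range]; omega
      · intro l hl; simp only [Finset.mem_range] at hl
        simp only [Finset.mem_filter, Finset.mem_Icc]; omega
      · intro k hk; simp only [Finset.mem_filter, Finset.mem_Icc] at hk; omega
      · intro l hl; simp only [Finset.mem_range] at hl; omega
      · intro k hk
        simp only [Finset.mem_filter, Finset.mem_Icc] at hk
        have hnb1 : (nb + 1) * N = nb * N + N := by ring
        have hik : i + k = (nb + 1) * N + (m + k - N) := by rw [hnb1]; omega
        have hrN : m + k - N < N := by omega
        have hmod : (i + k) % N = m + k - N := by rw [hik]; exact (hdivmod _ _ hrN).2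
        have hdiv : (i + k) / N = nb + 1 := by rw [hik]; exact (hdivmod _ _ hrN).1
        have hcv : c (i + k) k = D (nb + 1) (ind i) (ind (m + k - N)) := by
          simp only [hc]
          rw [hmod, hdiv, if_neg (by omega : ¬ k = 0), if_neg (by omega : ¬ k ≤ m + k - N),
            if_pos (⟨by omega, hk.1.2⟩ : k ≤ i + k ∧ k ≤ N),
            show m + k - N + N - k = m from by omega,
            hind_eq (i + k) (m + k - N) (by rw [hmod, Nat.mod_eq_of_lt hrN]), hindmi]
        rw [hcv, hik]
    -- claim C : the D_n^*-part
    have claimC : (∑ k ∈ Finset.Icc 1 N,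
          if m < k ∧ k ≤ i then C ((starRingEnd ℂ) (c i k)) * p (i - k) else 0)
        = (if nb = 0 then 0 else
            ∑ l : Fin N, C ((starRingEnd ℂ) (D nb l (ind i))) * p ((nb - 1) * N + (l : ℕ))) := by
      by_cases h0 : nb = 0
      · rw [if_pos h0]
        refine Finset.sum_eq_zero fun k hk => ?_
        have hz0 : nb * N = 0 := by rw [h0, zero_mul]
        rw [if_neg (by omega : ¬ (m < k ∧ k ≤ i))]
      · rw [if_neg h0]
        have h1 : 1 ≤ nb := Nat.one_le_iff_ne_zero.mpr h0
        have hq' : (nb - 1) * N + N = nb * N := by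
          obtain ⟨t, ht⟩ := Nat.exists_eq_add_of_le h1
          rw [ht, show 1 + t - 1 = t from by omega]; ring
        have hNi : N ≤ i := by
          have h2 : N ≤ nb * N := Nat.le_mul_of_pos_left N h1
          omega
        have hSD : (∑ l : Fin N, C ((starRingEnd ℂ) (D nb l (ind i))) * p ((nb - 1) * N + (l : ℕ)))
            = ∑ l ∈ Finset.range N,
                C ((starRingEnd ℂ) (D nb (ind l) (ind i))) * p ((nb - 1) * N + l) := by
          rw [← hconv fun l => C ((starRingEnd ℂ) (D nb (ind l) (ind i))) * p ((nb - 1) * N + l)]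
          exact Finset.sum_congr rfl fun l _ => by rw [hind_coe]
        rw [hSD]
        have hsplit2 : (∑ l ∈ Finset.range N,
              C ((starRingEnd ℂ) (D nb (ind l) (ind i))) * p ((nb - 1) * N + l))
            = ∑ l ∈ Finset.Ico m N,
                C ((starRingEnd ℂ) (D nb (ind l) (ind i))) * p ((nb - 1) * N + l) := by
          rw [Finset.range_eq_Ico, ← Finset.sum_Ico_consecutive _ (Nat.zero_le m) (le_of_lt hmN)]
          have hzz : (∑ l ∈ Finset.Ico 0 m,
              C ((starRingEnd ℂ) (D nb (ind l) (ind i))) * p ((nb - 1) * N + l)) = 0 := by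
            refine Finset.sum_eq_zero fun l hl => ?_
            simp only [Finset.mem_Ico] at hl
            have hD0 : D nb (ind l) (ind i) = 0 := by
              refine hDlow nb h1 _ _ ?_
              show l % N < i % N
              rw [Nat.mod_eq_of_lt (by omega : l < N), ← hm]
              omega
            rw [hD0, map_zero, map_zero, zero_mul]
          rw [hzz, zero_add]
        rw [hsplit2, ← Finset.sum_filter]
        refine Finset.sum_nbij' (fun k => m + N - k) (fun l => m + N - l) ?_ ?_ ?_ ?_ ?_
        · intro k hk; simp only [Finset.mem_filter, Finset.mem_Icc] at hk
          simp only [Finset.mem_Ico]; omega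
        · intro l hl; simp only [Finset.mem_Ico] at hl
          simp only [Finset.mem_filter, Finset.mem_Icc]; omega
        · intro k hk; simp only [Finset.mem_filter, Finset.mem_Icc] at hk; omega
        · intro l hl; simp only [Finset.mem_Ico] at hl; omega
        · intro k hk
          simp only [Finset.mem_filter, Finset.mem_Icc] at hk
          have hcv : c i k = D nb (ind (m + N - k)) (ind i) := by
            simp only [hc]
            rw [← hm, ← hnb, if_neg (by omega : ¬ k = 0), if_neg (by omega : ¬ k ≤ m),
              if_pos (⟨by omega, hk.1.2⟩ : k ≤ i ∧ k ≤ N)]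
          rw [hcv]
          have hidx : i - k = (nb - 1) * N + (m + N - k) := by omega
          rw [hidx]
    rw [← claimA, ← claimB, ← claimC]
    ring
end

section
/- Let h ∈ ℂ[X], c ∈ ℂ, and M ≥ 0 with (X − c)^{M+1} dividing h. Let N ≥ 1, let q_0,…,q_{N−1} ∈ ℂ[X], and set p(x) = Σ_{n=0}^{N−1} x^n q_n(h(x)). Then for every integer j with 0 ≤ j ≤ M, the j-th derivative of p at c is p^{(j)}(c) = Σ_{n=j}^{N−1} (n!/(n−j)!) c^{n−j} q_n(0). In particular p(c) = Σ_{n=0}^{N−1} c^n q_n(0). -/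
open Polynomial Finset

/-- If `(X - c)^{M+1}` divides `h` and `p(x) = ∑_{n=0}^{N-1} x^n q_n(h(x))`, then for every
`0 ≤ j ≤ M` the `j`-th derivative of `p` at `c` equals
`∑_{n} (n!/(n-j)!) c^{n-j} q_n(0)` (descending factorial, zero for `n < j`). -/
theorem stmt8 (h : Polynomial ℂ) (c : ℂ) (M : ℕ)
    (hdvd : (X - C c) ^ (M + 1) ∣ h)
    (N : ℕ) (hN : 1 ≤ N) (q : ℕ → Polynomial ℂ) (p : Polynomial ℂ)
    (hp : p = ∑ n ∈ Finset.range N, X ^ n * (q n).comp h) :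
    ∀ j : ℕ, j ≤ M →
      (Polynomial.derivative^[j] p).eval c =
        ∑ n ∈ Finset.range N, (n.descFactorial j : ℂ) * c ^ (n - j) * (q n).eval 0 := by
  intro j hj
  set g : Polynomial ℂ := ∑ n ∈ Finset.range N, C ((q n).eval 0) * X ^ n with hg
  have key : ∀ n : ℕ, h ∣ (q n).comp h - C ((q n).eval 0) := by
    intro n
    have hx : X ∣ q n - C ((q n).eval 0) := by
      rw [X_dvd_iff]
      simp [coeff_zero_eq_eval_zero]
    obtain ⟨s, hs⟩ := hx
    refine ⟨s.comp h, ?_⟩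
    have := congrArg (fun r => r.comp h) hs
    simpa [sub_comp, mul_comp] using this
  have hdvd2 : (X - C c) ^ (M + 1) ∣ p - g := by
    rw [hp, hg, ← Finset.sum_sub_distrib]
    refine Finset.dvd_sum fun n _ => ?_
    have : X ^ n * (q n).comp h - C ((q n).eval 0) * X ^ n
        = X ^ n * ((q n).comp h - C ((q n).eval 0)) := by ring
    rw [this]
    exact Dvd.dvd.mul_left (hdvd.trans (key n)) _
  have hzero : (Polynomial.derivative^[j] (p - g)).eval c = 0 := by
    have := pow_sub_dvd_iterate_derivative_of_pow_dvd j hdvd2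
    obtain ⟨r, hr⟩ := this
    rw [hr]
    have hM : M + 1 - j = (M - j) + 1 := by omega
    simp [hM, eval_pow]
  have hsplit : (Polynomial.derivative^[j] p).eval c
      = (Polynomial.derivative^[j] g).eval c := by
    have : Polynomial.derivative^[j] (p - g)
        = Polynomial.derivative^[j] p - Polynomial.derivative^[j] g :=
      Polynomial.iterate_derivative_sub
    rw [this, eval_sub, sub_eq_zero] at hzero
    exact hzero
  rw [hsplit, hg, iterate_derivative_sum, eval_finset_sum]
  refine Finset.sum_congr rfl fun n _ => ?_
  rw [iterate_derivative_C_mul, iterate_derivative_X_pow_eq_C_mul]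
  simp only [eval_mul, eval_C, eval_pow, eval_natCast, eval_X]
  ring
end
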